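/- If an i/o transition system is interactive (after every input transition, every subsequent infinite path contains an output transition), then every infinite path from the initial state whose input stream is infinite also produces an infinite output stream; hence the system realises a total ω-translation φ : {0,1}^ω → {0,1}^ω. -/
import Mathlib


/-- A labelled transition system over actions `A` together with the silent action `τ`
(represented by `none`). -/
structure LTS (A : Type) where
  S : Type
  tr : S → Option A → S → Prop
  init : S

namespace LTS

variable {A : Type}

/-- Reflexive-transitive closure of τ-steps, `s ⇒ t`. -/
def Star (T : LTS A) : T.S → T.S → Prop :=
  Relation.ReflTransGen (fun s t => T.tr s none t)

/-- `s →(a) t`: either `s →a t`, or `a = τ` and `s = t`. -/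
def OptStep (T : LTS A) (s : T.S) (a : Option A) (t : T.S) : Prop :=
  T.tr s a t ∨ (a = none ∧ s = t)

/-- `R` is a branching bisimulation from `T₁` to `T₂`. -/
def IsBB (T₁ T₂ : LTS A) (R : T₁.S → T₂.S → Prop) : Prop :=
  (∀ s₁ s₂, R s₁ s₂ → ∀ a s₁', T₁.tr s₁ a s₁' →
    ∃ s₂'' s₂', T₂.Star s₂ s₂'' ∧ T₂.OptStep s₂'' a s₂' ∧ R s₁ s₂'' ∧ R s₁' s₂') ∧
  (∀ s₁ s₂, R s₁ s₂ → ∀ a s₂', T₂.tr s₂ a s₂' →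
    ∃ s₁'' s₁', T₁.Star s₁ s₁'' ∧ T₁.OptStep s₁'' a s₁' ∧ R s₁'' s₂ ∧ R s₁' s₂')

/-- `T₁` and `T₂` are branching bisimilar. -/
def BBisim (T₁ T₂ : LTS A) : Prop :=
  ∃ R, IsBB T₁ T₂ R ∧ R T₁.init T₂.init

end LTS

/-- Visible labels of an i/o transition system: input actions `?b` and output actions `!b`.
The silent action τ is represented by `none : Option IOLabel`. -/
inductive IOLabel where
  | inp : Bool → IOLabel
  | out : Bool → IOLabel
deriving DecidableEq

/-- An i/o transition system: a labelled transition system over `{?0,?1,!0,!1,τ}` whose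
states are partitioned into input states (`I`) and execution states (the rest),
satisfying alternation, unambiguity and totality. -/
structure IOTS extends LTS IOLabel where
  /-- the set of input states; the execution states are its complement -/
  I : S → Prop
  init_mem : I init
  /-- Alternation, input states: transitions are labelled `?b` and go to execution states. -/
  alt_I : ∀ s a t, I s → tr s a t → (∃ b, a = some (IOLabel.inp b)) ∧ ¬ I t
  /-- Alternation, execution states: transitions are labelled `!b` or `τ` and go to input states. -/
  alt_E : ∀ s a t, ¬ I s → tr s a t → (a = none ∨ ∃ b, a = some (IOLabel.out b)) ∧ I t
  /-- Unambiguity: every execution state has exactly one outgoing transition. -/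
  unamb : ∀ s, ¬ I s → ∃! p : Option IOLabel × S, tr s p.1 p.2
  /-- Totality: every input state has exactly two outgoing transitions, labelled `?0` and `?1`. -/
  total : ∀ s, I s → ∀ b : Bool, ∃! t, tr s (some (IOLabel.inp b)) t

namespace IOTS

/-- An infinite path through the transition system, with states `p` and labels `l`. -/
def InfPath (T : IOTS) (p : ℕ → T.S) (l : ℕ → Option IOLabel) : Prop :=
  ∀ n, T.tr (p n) (l n) (p (n + 1))

/-- The sequence of input-action labels of `l` (ignoring τ and output labels)
spells out the stream `x`. -/
def SpellsInput (l : ℕ → Option IOLabel) (x : ℕ → Bool) : Prop :=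
  ∃ φ : ℕ → ℕ, StrictMono φ ∧ (∀ n, l (φ n) = some (IOLabel.inp (x n))) ∧
    ∀ m b, l m = some (IOLabel.inp b) → ∃ n, φ n = m

/-- The sequence of output-action labels of `l` (ignoring τ and input labels)
spells out the stream `y`. -/
def SpellsOutput (l : ℕ → Option IOLabel) (y : ℕ → Bool) : Prop :=
  ∃ φ : ℕ → ℕ, StrictMono φ ∧ (∀ n, l (φ n) = some (IOLabel.out (y n))) ∧
    ∀ m b, l m = some (IOLabel.out b) → ∃ n, φ n = m

/-- Interactiveness: after every input transition, every infinite path contains an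
output transition. -/
def Interactive (T : IOTS) : Prop :=
  ∀ s (b : Bool) s₀, T.tr s (some (IOLabel.inp b)) s₀ →
    ∀ (p : ℕ → T.S) (l : ℕ → Option IOLabel), p 0 = s₀ →
      (∀ n, T.tr (p n) (l n) (p (n + 1))) → ∃ j b', l j = some (IOLabel.out b')

/-- `T` realises the ω-translation `φ`: for every input stream `x` there is an infinite
path from the initial state with input stream `x`, and every such path has output
stream `φ x`. -/
def Realises (T : IOTS) (φ : (ℕ → Bool) → (ℕ → Bool)) : Prop :=
  ∀ x : ℕ → Bool,
    (∃ p l, p 0 = T.init ∧ InfPath T p l ∧ SpellsInput l x) ∧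
    (∀ p l, p 0 = T.init → InfPath T p l → SpellsInput l x → SpellsOutput l (φ x))

end IOTS

section Aux

open IOTS IOLabel

attribute [local instance] Classical.propDecidable

variable {T : IOTS}

lemma parity {p : ℕ → T.S} {l : ℕ → Option IOLabel}
    (hp : IOTS.InfPath T p l) (h0 : T.I (p 0)) : ∀ n, T.I (p n) ↔ Even n := by
  intro n
  induction n with
  | zero => simp [h0]
  | succ n ih =>
    rw [Nat.even_add_one]
    by_cases h : Even n
    · have hI := ih.mpr h
      have := T.alt_I _ _ _ hI (hp n)
      simp [h, this.2]
    · have hE : ¬ T.I (p n) := fun hi => h (ih.mp hi)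
      have := T.alt_E _ _ _ hE (hp n)
      simp [h, this.2]

lemma label_not_inp {p : ℕ → T.S} {l : ℕ → Option IOLabel}
    (hp : IOTS.InfPath T p l) {n : ℕ} (hE : ¬ T.I (p n)) {b : Bool} :
    l n ≠ some (IOLabel.inp b) := by
  rcases (T.alt_E _ _ _ hE (hp n)).1 with h | ⟨c, h⟩ <;> simp [h]

lemma phi_eq {p : ℕ → T.S} {l : ℕ → Option IOLabel} {x : ℕ → Bool} {φ : ℕ → ℕ}
    (hp : IOTS.InfPath T p l) (h0 : T.I (p 0))
    (hmono : StrictMono φ) (hinp : ∀ n, l (φ n) = some (IOLabel.inp (x n)))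
    (hcov : ∀ m b, l m = some (IOLabel.inp b) → ∃ n, φ n = m) :
    φ = fun n => 2 * n := by
  have hpar := parity hp h0
  have g2 : StrictMono (fun n : ℕ => 2 * n) := fun a b h => by dsimp only; omega
  refine (hmono.range_inj g2).mp ?_
  ext m
  simp only [Set.mem_range]
  constructor
  · rintro ⟨n, rfl⟩
    by_contra hodd
    have hne : ¬ Even (φ n) := by
      rintro ⟨k, hk⟩; exact hodd ⟨k, by omega⟩
    exact label_not_inp hp (fun hi => hne ((hpar _).mp hi)) (hinp n)
  · rintro ⟨k, rfl⟩
    have hI : T.I (p (2 * k)) := (hpar _).mpr ⟨k, by omega⟩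
    obtain ⟨⟨b, hb⟩, -⟩ := T.alt_I _ _ _ hI (hp (2 * k))
    exact hcov _ b hb

lemma even_label {p : ℕ → T.S} {l : ℕ → Option IOLabel} {x : ℕ → Bool}
    (hp : IOTS.InfPath T p l) (h0 : T.I (p 0))
    (hx : IOTS.SpellsInput l x) : ∀ n, l (2 * n) = some (IOLabel.inp (x n)) := by
  obtain ⟨φ, hmono, hinp, hcov⟩ := hx
  have := phi_eq hp h0 hmono hinp hcov
  intro n
  have := hinp n
  rwa [congrFun ‹φ = fun n => 2 * n› n] at this

/-- Determinacy: two infinite paths from `init` with the same even labels coincide. -/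
lemma path_unique {p q : ℕ → T.S} {l m : ℕ → Option IOLabel}
    (hp : IOTS.InfPath T p l) (hq : IOTS.InfPath T q m)
    (h0p : p 0 = T.init) (h0q : q 0 = T.init)
    (hl : ∀ n, l (2 * n) = m (2 * n)) :
    p = q ∧ l = m := by
  have hIp : ∀ n, T.I (p n) ↔ Even n := parity hp (h0p ▸ T.init_mem)
  have hIq : ∀ n, T.I (q n) ↔ Even n := parity hq (h0q ▸ T.init_mem)
  have key : ∀ n, p (2 * n) = q (2 * n) ∧ p (2 * n + 1) = q (2 * n + 1) ∧
      l (2 * n + 1) = m (2 * n + 1) ∧ p (2 * n + 2) = q (2 * n + 2) := by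
    have step : ∀ n, p (2 * n) = q (2 * n) →
        p (2 * n + 1) = q (2 * n + 1) ∧ l (2 * n + 1) = m (2 * n + 1) ∧
        p (2 * n + 2) = q (2 * n + 2) := by
      intro n h2n
      have hI : T.I (p (2 * n)) := (hIp _).mpr ⟨n, by omega⟩
      obtain ⟨⟨b, hb⟩, -⟩ := T.alt_I _ _ _ hI (hp (2 * n))
      have htp : T.tr (p (2 * n)) (some (IOLabel.inp b)) (p (2 * n + 1)) := hb ▸ hp (2 * n)
      have htq : T.tr (q (2 * n)) (some (IOLabel.inp b)) (q (2 * n + 1)) := by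
        have := hq (2 * n); rwa [← hl n, hb] at this
      have hEx := T.total (p (2 * n)) hI b
      have h1 : p (2 * n + 1) = q (2 * n + 1) :=
        (hEx.unique htp (h2n ▸ htq))
      have hE : ¬ T.I (p (2 * n + 1)) := fun hi => by
        rcases (hIp _).mp hi with ⟨k, hk⟩; omega
      have hU := T.unamb (p (2 * n + 1)) hE
      have e1 : (l (2 * n + 1), p (2 * n + 2)) = (m (2 * n + 1), q (2 * n + 2)) :=
        hU.unique (hp (2 * n + 1)) (by have := hq (2 * n + 1); rwa [← h1] at this)
      exact ⟨h1, congrArg Prod.fst e1, congrArg Prod.snd e1⟩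
    intro n
    induction n with
    | zero =>
      have h0 : p (2 * 0) = q (2 * 0) := by simpa using h0p.trans h0q.symm
      exact ⟨h0, step 0 h0⟩
    | succ n ih =>
      have h0 : p (2 * (n + 1)) = q (2 * (n + 1)) := by
        have := ih.2.2.2
        have e : 2 * (n + 1) = 2 * n + 2 := by omega
        rwa [e]
      exact ⟨h0, step (n + 1) h0⟩
  constructor
  · funext n
    rcases Nat.even_or_odd n with ⟨k, hk⟩ | ⟨k, hk⟩
    · have := (key k).1; rwa [show 2 * k = n by omega] at this
    · have := (key k).2.1; rwa [show 2 * k + 1 = n by omega] at this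
  · funext n
    rcases Nat.even_or_odd n with ⟨k, hk⟩ | ⟨k, hk⟩
    · have := hl k; rwa [show 2 * k = n by omega] at this
    · have := (key k).2.2.1; rwa [show 2 * k + 1 = n by omega] at this

/-- The canonical path states for input stream `x`. -/
noncomputable def canonP (T : IOTS) (x : ℕ → Bool) : ℕ → T.S
  | 0 => T.init
  | n + 1 =>
    if h : T.I (canonP T x n) then (T.total _ h (x (n / 2))).exists.choose
    else (T.unamb _ h).exists.choose.2

/-- The canonical path labels for input stream `x`. -/
noncomputable def canonL (T : IOTS) (x : ℕ → Bool) (n : ℕ) : Option IOLabel :=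
  if h : T.I (canonP T x n) then some (IOLabel.inp (x (n / 2)))
  else (T.unamb _ h).exists.choose.1

lemma canon_path (T : IOTS) (x : ℕ → Bool) : IOTS.InfPath T (canonP T x) (canonL T x) := by
  intro n
  rw [canonL]
  show T.tr _ _ (canonP T x (n+1))
  rw [canonP]
  by_cases h : T.I (canonP T x n)
  · rw [dif_pos h, dif_pos h]
    exact (T.total _ h (x (n / 2))).exists.choose_spec
  · rw [dif_neg h, dif_neg h]
    exact (T.unamb _ h).exists.choose_spec

lemma canon_spells (T : IOTS) (x : ℕ → Bool) : IOTS.SpellsInput (canonL T x) x := by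
  have h0 : T.I (canonP T x 0) := by rw [canonP]; exact T.init_mem
  have hpar := parity (canon_path T x) h0
  refine ⟨fun n => 2 * n, fun a b h => by dsimp only; omega, fun n => ?_, fun m b hm => ?_⟩
  · have hI : T.I (canonP T x (2 * n)) := (hpar _).mpr ⟨n, by omega⟩
    show canonL T x (2 * n) = _
    rw [canonL, dif_pos hI, Nat.mul_div_cancel_left n (by omega)]
  · by_cases hI : T.I (canonP T x m)
    · obtain ⟨k, hk⟩ := (hpar m).mp hI
      exact ⟨k, by dsimp only; omega⟩
    · exact absurd hm (label_not_inp (canon_path T x) hI)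

end Aux

theorem stmt_8 (T : IOTS) (hint : IOTS.Interactive T) :
    (∀ (p : ℕ → T.S) (l : ℕ → Option IOLabel) (x : ℕ → Bool),
      p 0 = T.init → IOTS.InfPath T p l → IOTS.SpellsInput l x →
        ∃ y : ℕ → Bool, IOTS.SpellsOutput l y) ∧
    ∃ φ : (ℕ → Bool) → (ℕ → Bool), IOTS.Realises T φ := by
  have part1 : ∀ (p : ℕ → T.S) (l : ℕ → Option IOLabel) (x : ℕ → Bool),
      p 0 = T.init → IOTS.InfPath T p l → IOTS.SpellsInput l x →
        ∃ y : ℕ → Bool, IOTS.SpellsOutput l y := by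
    rintro p l x h0 hp ⟨φ, hmono, hinp, hcov⟩
    set O : ℕ → Prop := fun m => ∃ b, l m = some (IOLabel.out b) with hOdef
    have hinf : (setOf O).Infinite := by
      apply Set.infinite_of_not_bddAbove
      rw [not_bddAbove_iff]
      intro m
      have hge : m < φ (m + 1) := lt_of_lt_of_le (Nat.lt_succ_self m) hmono.le_apply
      have htr : T.tr (p (φ (m + 1))) (some (IOLabel.inp (x (m + 1)))) (p (φ (m + 1) + 1)) := by
        have := hp (φ (m + 1)); rwa [hinp (m + 1)] at this
      obtain ⟨j, b', hj⟩ := hint _ _ _ htr (fun i => p (φ (m + 1) + 1 + i))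
        (fun i => l (φ (m + 1) + 1 + i)) rfl (fun i => hp (φ (m + 1) + 1 + i))
      exact ⟨φ (m + 1) + 1 + j, ⟨b', hj⟩, by omega⟩
    refine ⟨fun n => (Nat.nth_mem_of_infinite hinf n).choose, Nat.nth O,
      Nat.nth_strictMono hinf, fun n => (Nat.nth_mem_of_infinite hinf n).choose_spec,
      fun m b hm => ?_⟩
    exact Nat.subset_range_nth (show O m from ⟨b, hm⟩)
  have hc0 : ∀ x : ℕ → Bool, canonP T x 0 = T.init := fun _ => rfl
  have hEy : ∀ x, ∃ y, IOTS.SpellsOutput (canonL T x) y :=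
    fun x => part1 _ _ x (hc0 x) (canon_path T x) (canon_spells T x)
  refine ⟨part1, fun x => (hEy x).choose, fun x =>
    ⟨⟨canonP T x, canonL T x, hc0 x, canon_path T x, canon_spells T x⟩, ?_⟩⟩
  intro p l hp0 hpath hsp
  have h0I : T.I (p 0) := by rw [hp0]; exact T.init_mem
  have hl : ∀ n, l (2 * n) = canonL T x (2 * n) := by
    intro n
    rw [even_label hpath h0I hsp n,
      even_label (canon_path T x) (by rw [hc0 x]; exact T.init_mem) (canon_spells T x) n]
  obtain ⟨-, hleq⟩ := path_unique hpath (canon_path T x) hp0 (hc0 x) hl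
  rw [hleq]
  exact (hEy x).choose_spec
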